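/- The particular solution x_p = M·(A')*·b is a least-squares solution: for every vector x ∈ ℂ^n, the Euclidean norm satisfies ‖A·x_p − b‖ ≤ ‖A·x − b‖. -/

import Mathlib

/-!
The quasi-orthonormality `A'ᴴ A' = I_S` makes `A'ᴴ A'` idempotent, so `A'` is a partial isometry
and `A' A'ᴴ` is the orthogonal projection onto the column space of `A'`. Hence the residual
`A' A'ᴴ b - b` of `x_p` is orthogonal to that column space, and by Pythagoras no vector `A' z - b`
is shorter. Since `M` is invertible, `A' = A M` and `A` have the same column space, so the vectors
`A' z - b` are exactly the residuals `A x - b`.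
-/

open Matrix

open scoped ComplexOrder

noncomputable def euclNorm {m : ℕ} (v : Fin m → ℂ) : ℝ :=
  ‖(WithLp.equiv 2 (Fin m → ℂ)).symm v‖

lemma norm_le_norm_add_of_inner_eq_zero {𝕜 E : Type*} [RCLike 𝕜] [NormedAddCommGroup E]
    [InnerProductSpace 𝕜 E] {x y : E} (h : inner 𝕜 x y = 0) : ‖x‖ ≤ ‖x + y‖ := by
  rw [mul_self_le_mul_self_iff (norm_nonneg _) (norm_nonneg _),
    norm_add_sq_eq_norm_sq_add_norm_sq_of_inner_eq_zero x y h]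
  exact le_add_of_nonneg_right (mul_self_nonneg _)

namespace Matrix

variable {m n R 𝕜 : Type*}

lemma isIdempotentElem_diagonal_ite [Fintype n] [DecidableEq n] [Semiring R] (S : Finset n) :
    IsIdempotentElem (diagonal fun j => if j ∈ S then (1 : R) else 0) := by
  rw [IsIdempotentElem, diagonal_mul_diagonal]
  congr 1
  ext j
  split_ifs <;> simp

lemma conjTranspose_mul_self_mul_conjTranspose_of_isIdempotentElem [Fintype m] [Fintype n]
    [DecidableEq n] [PartialOrder R] [Ring R] [StarRing R] [StarOrderedRing R] [NoZeroDivisors R]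
    {A : Matrix m n R} (hA : IsIdempotentElem (Aᴴ * A)) :
    Aᴴ * A * Aᴴ = Aᴴ := by
  have h : (Aᴴ * A - 1) * (Aᴴ * A) = 0 := by
    rw [Matrix.sub_mul, hA.eq, Matrix.one_mul, sub_self]
  rwa [mul_conjTranspose_mul_self_eq_zero, Matrix.sub_mul, Matrix.one_mul, sub_eq_zero] at h

lemma conjTranspose_mulVec_residual_eq_zero [Fintype m] [Fintype n] [DecidableEq n]
    [PartialOrder R] [Ring R] [StarRing R] [StarOrderedRing R] [NoZeroDivisors R]
    {A : Matrix m n R} (hA : IsIdempotentElem (Aᴴ * A)) (b : m → R) :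
    Aᴴ *ᵥ (A *ᵥ (Aᴴ *ᵥ b) - b) = 0 := by
  rw [mulVec_sub, mulVec_mulVec, mulVec_mulVec,
    conjTranspose_mul_self_mul_conjTranspose_of_isIdempotentElem hA, sub_self]

lemma norm_toLp_mulVec_sub_le [RCLike 𝕜] [Fintype m] [Fintype n]
    {A : Matrix m n 𝕜} {y : n → 𝕜} {b : m → 𝕜}
    (h : Aᴴ *ᵥ (A *ᵥ y - b) = 0) (z : n → 𝕜) :
    ‖WithLp.toLp 2 (A *ᵥ y - b)‖ ≤ ‖WithLp.toLp 2 (A *ᵥ z - b)‖ := by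
  have horth : inner 𝕜 (WithLp.toLp 2 (A *ᵥ y - b)) (WithLp.toLp 2 (A *ᵥ (z - y))) = 0 := by
    rw [EuclideanSpace.inner_toLp_toLp, dotProduct_comm, dotProduct_mulVec,
      ← conjTranspose_conjTranspose A, ← star_mulVec, conjTranspose_conjTranspose, h,
      star_zero, zero_dotProduct]
  have hsplit : A *ᵥ z - b = (A *ᵥ y - b) + A *ᵥ (z - y) := by
    rw [mulVec_sub]; abel
  rw [hsplit, WithLp.toLp_add]
  exact norm_le_norm_add_of_inner_eq_zero horth

end Matrix

/-- Least-squares property of the column-based particular solution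
`x_p = M A'ᴴ b`: its residual `A x_p − b` has Euclidean norm no larger than the
residual of any other vector. -/
theorem col_particular_solution_least_squares {m n : ℕ}
    (A : Matrix (Fin m) (Fin n) ℂ) (b : Fin m → ℂ)
    (M : Matrix (Fin n) (Fin n) ℂ) (hM : IsUnit M)
    (A' : Matrix (Fin m) (Fin n) ℂ) (hA' : A' = A * M)
    (S : Finset (Fin n))
    (hQO : A'ᴴ * A' = Matrix.diagonal (fun j => if j ∈ S then (1 : ℂ) else 0)) :
    ∀ x : Fin n → ℂ,
      euclNorm (A *ᵥ (M *ᵥ (A'ᴴ *ᵥ b)) - b) ≤ euclNorm (A *ᵥ x - b) := by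
  intro x
  obtain ⟨z, rfl⟩ := mulVec_surjective_iff_isUnit.2 hM x
  have hIdem : IsIdempotentElem (A'ᴴ * A') := hQO ▸ isIdempotentElem_diagonal_ite S
  have hA'mulVec : ∀ v, A *ᵥ (M *ᵥ v) = A' *ᵥ v := fun v => by rw [hA', mulVec_mulVec]
  rw [euclNorm, euclNorm, hA'mulVec, hA'mulVec]
  exact norm_toLp_mulVec_sub_le (conjTranspose_mulVec_residual_eq_zero hIdem b) z
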